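/- Let k ∈ ℝ, a > 0 and b ∈ (0,2). Then there exists a constant C > 0 (depending only on k, a, b) such that for all v, v', v*' ∈ ℝ³ satisfying |v|² ≤ |v'|² + |v*'|², one has e^{a⟨v⟩^b} ⟨v'⟩^k ⟨v*'⟩^k ≤ C ⟨v⟩^k e^{a⟨v'⟩^b} e^{a⟨v*'⟩^b}. (In particular this applies when v' and v*' are the post-collision velocities associated to a pair (v, v*), since then |v|² + |v*|² = |v'|² + |v*'|².) -/

import Mathlib

open MeasureTheory Real
open scoped ENNReal RealInnerProductSpace Classical

noncomputable section

/-- velocity space ℝ³ -/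
abbrev E3 : Type := EuclideanSpace ℝ (Fin 3)

/-- the unit sphere 𝕊² ⊆ ℝ³ -/
abbrev S2 : Type := Metric.sphere (0 : E3) 1

/-- surface measure on the unit sphere -/
noncomputable instance : MeasureSpace S2 := ⟨(volume : Measure E3).toSphere⟩

/-- Japanese bracket ⟨v⟩ = √(1+|v|²). -/
def jap (v : E3) : ℝ := Real.sqrt (1 + ‖v‖ ^ 2)

/-- Post-collision velocity v' = (v+v*)/2 + (|v-v*|/2)σ. -/
def vP (v w : E3) (σ : S2) : E3 := (2⁻¹ : ℝ) • (v + w) + (‖v - w‖ / 2) • (σ : E3)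

/-- Post-collision velocity v*' = (v+v*)/2 - (|v-v*|/2)σ. -/
def vsP (v w : E3) (σ : S2) : E3 := (2⁻¹ : ℝ) • (v + w) - (‖v - w‖ / 2) • (σ : E3)

/-- cos θ = ((v-v*)/|v-v*|)·σ. -/
def cosTheta (v w : E3) (σ : S2) : ℝ := ⟪v - w, (σ : E3)⟫ / ‖v - w‖

/-- sin(θ/2) = √((1-cos θ)/2). -/
def sinHalf (v w : E3) (σ : S2) : ℝ := Real.sqrt ((1 - cosTheta v w σ) / 2)

/-- cos(θ/2) = √((1+cos θ)/2). -/
def cosHalf (v w : E3) (σ : S2) : ℝ := Real.sqrt ((1 + cosTheta v w σ) / 2)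

/-- a fixed reference unit direction, used to express rotation-invariant angular integrals -/
def e1 : E3 := EuclideanSpace.single 0 1

/-- cos θ for the deviation angle of σ relative to the fixed direction `e1` -/
def cos1 (σ : S2) : ℝ := ⟪e1, (σ : E3)⟫

def sinHalf1 (σ : S2) : ℝ := Real.sqrt ((1 - cos1 σ) / 2)

def cosHalf1 (σ : S2) : ℝ := Real.sqrt ((1 + cos1 σ) / 2)

/-- the standard Maxwellian μ(v) = (2π)^{-3/2} e^{-|v|²/2} -/
def maxw (v : E3) : ℝ := (2 * π) ^ (-(3 : ℝ) / 2) * Real.exp (-‖v‖ ^ 2 / 2)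

/-- Grad's angular cutoff assumption (A2): `bf` is measurable, nonnegative,
`K ≤ bf ≤ K⁻¹` on `[0,1]` for some `K > 0`, and `bf` vanishes on negatives. -/
def gradCutoff (bf : ℝ → ℝ) : Prop :=
  Measurable bf ∧ (∀ t, 0 ≤ bf t) ∧
    (∃ K : ℝ, 0 < K ∧ ∀ t ∈ Set.Icc (0 : ℝ) 1, K ≤ bf t ∧ bf t ≤ K⁻¹) ∧
    ∀ t : ℝ, t < 0 → bf t = 0

/-- gain operator Q⁺ -/
def Qgain (γ : ℝ) (bf : ℝ → ℝ) (f g : E3 → ℝ) (v : E3) : ℝ :=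
  ∫ w : E3, ∫ σ : S2, ‖v - w‖ ^ γ * bf (cosTheta v w σ) * (f (vsP v w σ) * g (vP v w σ))

/-- loss operator Q⁻ -/
def Qloss (γ : ℝ) (bf : ℝ → ℝ) (f g : E3 → ℝ) (v : E3) : ℝ :=
  ∫ w : E3, ∫ σ : S2, ‖v - w‖ ^ γ * bf (cosTheta v w σ) * (f w * g v)

/-- the Boltzmann collision operator Q = Q⁺ - Q⁻ -/
def Qcol (γ : ℝ) (bf : ℝ → ℝ) (f g : E3 → ℝ) (v : E3) : ℝ :=
  ∫ w : E3, ∫ σ : S2, ‖v - w‖ ^ γ * bf (cosTheta v w σ) *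
    (f (vsP v w σ) * g (vP v w σ) - f w * g v)

/-- collision frequency ν(v) -/
def nuF (γ : ℝ) (bf : ℝ → ℝ) (v : E3) : ℝ :=
  ∫ w : E3, ∫ σ : S2, ‖v - w‖ ^ γ * bf (cosTheta v w σ) * maxw w

/-- squared weighted norm ‖f‖²_{L²_q} -/
def wSqR (q : ℝ) (f : E3 → ℝ) : ℝ := ∫ v : E3, f v ^ 2 * jap v ^ (2 * q)

/-- weighted norm ‖f‖_{L²_q} -/
def wNorm (q : ℝ) (f : E3 → ℝ) : ℝ := Real.sqrt (wSqR q f)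

/-- squared star norm ‖f‖²_{L²_{k+γ/2,*}} = ∫∫ μ(v*)|v-v*|^γ f(v)² ⟨v⟩^{2k} -/
def starSq (γ k : ℝ) (f : E3 → ℝ) : ℝ :=
  ∫ v : E3, ∫ w : E3, maxw w * ‖v - w‖ ^ γ * f v ^ 2 * jap v ^ (2 * k)

/-- star norm ‖f‖_{L²_{k+γ/2,*}} -/
def starNorm (γ k : ℝ) (f : E3 → ℝ) : ℝ := Real.sqrt (starSq γ k f)

/-- squared exponentially weighted norm ‖f‖²_{L²_{q,a,b}} -/
def expSq (q a b : ℝ) (f : E3 → ℝ) : ℝ :=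
  ∫ v : E3, f v ^ 2 * jap v ^ (2 * q) * Real.exp (2 * a * jap v ^ b)

/-- exponentially weighted norm ‖f‖_{L²_{q,a,b}} -/
def expNorm (q a b : ℝ) (f : E3 → ℝ) : ℝ := Real.sqrt (expSq q a b f)

/-!
Write `X = ⟨v'⟩`, `Y = ⟨v*'⟩`, `Z = ⟨v⟩`, all `≥ 1`, so that `Z² ≤ X² + Y²`, and let `Y ≤ X`.
Concavity of `t ↦ t ^ (b/2)` gives `Z^b ≤ X^b + (b/2) Y^b`, so the exponential weights leave a
spare factor `exp (-a (1 - b/2) Y^b)`, which absorbs any power of `Y`. For `k ≤ 0` it suffices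
that `Z ≤ 2X` and `Y^k ≤ 1`. For `k > 0`, either `X ≤ 2Z` and `X^k ≤ 2^k Z^k`, or `Z ≤ X/2`, in
which case `Z^b ≤ 2^(-b) X^b` and the spare factor `exp (-a (1 - 2^(-b)) X^b)` absorbs
`X^k Y^k ≤ X^(2k)`.
-/

open scoped Nat in
theorem rpow_le_mul_exp_mul_rpow (m : ℝ) {b c : ℝ} (hb : 0 < b) (hc : 0 < c) :
    ∃ D > 0, ∀ s : ℝ, 1 ≤ s → s ^ m ≤ D * exp (c * s ^ b) := by
  obtain ⟨n, hn⟩ := exists_nat_ge (m / b)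
  refine ⟨n ! / c ^ n, by positivity, fun s hs => ?_⟩
  have hcs : 0 ≤ c * s ^ b := by positivity
  calc s ^ m ≤ s ^ (b * n) := rpow_le_rpow_of_exponent_le hs (by rwa [div_le_iff₀' hb] at hn)
    _ = n ! / c ^ n * ((c * s ^ b) ^ n / n !) := by
      rw [rpow_mul_natCast (by linarith), mul_pow]
      field_simp
    _ ≤ n ! / c ^ n * exp (c * s ^ b) := by gcongr; exact pow_div_factorial_le_exp _ hcs n

theorem rpow_add_le_rpow_add_mul_rpow {p u w : ℝ} (hp0 : 0 ≤ p) (hp1 : p ≤ 1) (hw : 0 < w)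
    (hwu : w ≤ u) : (u + w) ^ p ≤ u ^ p + p * w ^ p := by
  have hu : 0 < u := hw.trans_le hwu
  calc (u + w) ^ p = u ^ p * (1 + w / u) ^ p := by
        rw [← mul_rpow hu.le (by positivity)]
        congr 1
        field_simp
    _ ≤ u ^ p * (1 + p * (w / u)) := by
        have hwu' : -1 ≤ w / u := by linarith [div_nonneg hw.le hu.le]
        gcongr
        exact rpow_one_add_le_one_add_mul_self hwu' hp0 hp1
    _ = u ^ p + p * (u ^ (p - 1) * w) := by
        rw [rpow_sub_one hu.ne']
        field_simp
    _ ≤ u ^ p + p * (w ^ (p - 1) * w) := by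
        have hp1' : p - 1 ≤ 0 := by linarith
        have := rpow_le_rpow_of_nonpos hw hwu hp1'
        gcongr
    _ = u ^ p + p * w ^ p := by
        rw [rpow_sub_one hw.ne']
        field_simp

theorem rpow_le_of_sq_le_sq_add_sq {b X Y Z : ℝ} (hb0 : 0 < b) (hb2 : b ≤ 2) (hY : 0 < Y)
    (hYX : Y ≤ X) (hZ : 0 ≤ Z) (h : Z ^ 2 ≤ X ^ 2 + Y ^ 2) : Z ^ b ≤ X ^ b + b / 2 * Y ^ b := by
  have sq_rpow : ∀ x : ℝ, 0 ≤ x → (x ^ 2) ^ (b / 2) = x ^ b := fun x hx => by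
    rw [← rpow_natCast_mul hx]
    norm_num [mul_div_cancel₀]
  calc Z ^ b = (Z ^ 2) ^ (b / 2) := (sq_rpow Z hZ).symm
    _ ≤ (X ^ 2 + Y ^ 2) ^ (b / 2) := by gcongr
    _ ≤ (X ^ 2) ^ (b / 2) + b / 2 * (Y ^ 2) ^ (b / 2) :=
        rpow_add_le_rpow_add_mul_rpow (by positivity) (by linarith) (by positivity) (by gcongr)
    _ = X ^ b + b / 2 * Y ^ b := by rw [sq_rpow X (hY.le.trans hYX), sq_rpow Y hY.le]

section WeightBounds

variable {a b k X Y Z : ℝ}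

theorem exp_mul_rpow_le_of_nonpos (ha : 0 ≤ a) (hb0 : 0 < b) (hb2 : b ≤ 2) (hk : k ≤ 0)
    (hY : 1 ≤ Y) (hYX : Y ≤ X) (hZ : 0 < Z) (h : Z ^ 2 ≤ X ^ 2 + Y ^ 2) :
    exp (a * Z ^ b) * X ^ k * Y ^ k ≤ 2 ^ (-k) * Z ^ k * exp (a * X ^ b) * exp (a * Y ^ b) := by
  have hX : 0 < X := by linarith
  have hexp : exp (a * Z ^ b) ≤ exp (a * X ^ b) * exp (a * Y ^ b) := by
    have hZb := rpow_le_of_sq_le_sq_add_sq hb0 hb2 (by linarith) hYX hZ.le h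
    have : Z ^ b ≤ X ^ b + Y ^ b := by nlinarith [rpow_nonneg (by linarith : 0 ≤ Y) b]
    rw [← exp_add, ← mul_add]
    gcongr
  have hpow : X ^ k * Y ^ k ≤ 2 ^ (-k) * Z ^ k := by
    have hZX : Z ≤ 2 * X := by nlinarith
    calc X ^ k * Y ^ k ≤ X ^ k * 1 := by gcongr; exact rpow_le_one_of_one_le_of_nonpos hY hk
      _ = 2 ^ (-k) * (2 * X) ^ k := by
        rw [mul_rpow zero_le_two hX.le, ← mul_assoc, ← rpow_add two_pos]
        simp
      _ ≤ 2 ^ (-k) * Z ^ k :=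
        mul_le_mul_of_nonneg_left (rpow_le_rpow_of_nonpos hZ hZX hk) (by positivity)
  calc exp (a * Z ^ b) * X ^ k * Y ^ k = exp (a * Z ^ b) * (X ^ k * Y ^ k) := by ring
    _ ≤ exp (a * X ^ b) * exp (a * Y ^ b) * (2 ^ (-k) * Z ^ k) := by gcongr
    _ = _ := by ring

theorem exp_mul_rpow_le_of_le_two_mul {D : ℝ} (ha : 0 ≤ a) (hb0 : 0 < b) (hb2 : b ≤ 2)
    (hk : 0 ≤ k) (hY : 0 < Y) (hYX : Y ≤ X) (hXZ : X ≤ 2 * Z) (h : Z ^ 2 ≤ X ^ 2 + Y ^ 2)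
    (hD : Y ^ k ≤ D * exp (a * (1 - b / 2) * Y ^ b)) :
    exp (a * Z ^ b) * X ^ k * Y ^ k ≤ 2 ^ k * D * Z ^ k * exp (a * X ^ b) * exp (a * Y ^ b) := by
  have hX : 0 ≤ X := by linarith
  have hZ : 0 ≤ Z := by linarith
  have hexp : exp (a * Z ^ b) ≤ exp (a * X ^ b) * exp (a * (b / 2) * Y ^ b) := by
    have := rpow_le_of_sq_le_sq_add_sq hb0 hb2 hY hYX hZ h
    rw [← exp_add]
    gcongr
    nlinarith
  have hXk : X ^ k ≤ 2 ^ k * Z ^ k := by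
    rw [← mul_rpow zero_le_two hZ]
    gcongr
  calc exp (a * Z ^ b) * X ^ k * Y ^ k
      ≤ exp (a * X ^ b) * exp (a * (b / 2) * Y ^ b) * (2 ^ k * Z ^ k) *
          (D * exp (a * (1 - b / 2) * Y ^ b)) := by gcongr
    _ = 2 ^ k * D * Z ^ k * exp (a * X ^ b) *
          exp (a * (b / 2) * Y ^ b + a * (1 - b / 2) * Y ^ b) := by rw [exp_add]; ring
    _ = 2 ^ k * D * Z ^ k * exp (a * X ^ b) * exp (a * Y ^ b) := by ring_nf

theorem exp_mul_rpow_le_of_two_mul_le {D : ℝ} (ha : 0 ≤ a) (hb0 : 0 < b) (hk : 0 ≤ k)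
    (hY : 0 ≤ Y) (hYX : Y ≤ X) (hZ : 1 ≤ Z) (hZX : 2 * Z ≤ X)
    (hD : X ^ (2 * k) ≤ D * exp (a * (1 - 2 ^ (-b)) * X ^ b)) :
    exp (a * Z ^ b) * X ^ k * Y ^ k ≤ D * Z ^ k * exp (a * X ^ b) * exp (a * Y ^ b) := by
  have hX : 0 < X := by linarith
  have hD0 : 0 ≤ D := nonneg_of_mul_nonneg_left ((rpow_nonneg hX.le _).trans hD) (exp_pos _)
  have hexp : exp (a * Z ^ b) ≤ exp (a * 2 ^ (-b) * X ^ b) := by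
    have hZb : Z ^ b ≤ 2 ^ (-b) * X ^ b := by
      rw [rpow_neg zero_le_two, inv_mul_eq_div, le_div_iff₀' (by positivity),
        ← mul_rpow zero_le_two (by linarith)]
      gcongr
    rw [mul_assoc]
    gcongr
  calc exp (a * Z ^ b) * X ^ k * Y ^ k
      ≤ exp (a * 2 ^ (-b) * X ^ b) * X ^ (2 * k) := by
        rw [mul_assoc, two_mul, rpow_add hX]
        gcongr
    _ ≤ exp (a * 2 ^ (-b) * X ^ b) * (D * exp (a * (1 - 2 ^ (-b)) * X ^ b)) := by gcongr
    _ = D * exp (a * X ^ b) := by rw [mul_left_comm, ← exp_add]; ring_nf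
    _ ≤ D * Z ^ k * exp (a * X ^ b) * exp (a * Y ^ b) := by
        have hZk : 1 ≤ Z ^ k := one_le_rpow hZ hk
        have hYb : 1 ≤ exp (a * Y ^ b) := one_le_exp (by positivity)
        calc D * exp (a * X ^ b) = D * 1 * exp (a * X ^ b) * 1 := by ring
          _ ≤ D * Z ^ k * exp (a * X ^ b) * exp (a * Y ^ b) := by gcongr

end WeightBounds

theorem exists_exp_mul_rpow_le (k : ℝ) {a b : ℝ} (ha : 0 < a) (hb0 : 0 < b) (hb2 : b < 2) :
    ∃ C > 0, ∀ X Y Z : ℝ, 1 ≤ X → 1 ≤ Y → 1 ≤ Z → Z ^ 2 ≤ X ^ 2 + Y ^ 2 →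
      exp (a * Z ^ b) * X ^ k * Y ^ k ≤ C * Z ^ k * exp (a * X ^ b) * exp (a * Y ^ b) := by
  have h2b : (2 : ℝ) ^ (-b) < 1 := rpow_lt_one_of_one_lt_of_neg one_lt_two (by linarith)
  obtain ⟨D₁, hD₁, hY⟩ := rpow_le_mul_exp_mul_rpow k hb0 (by nlinarith : 0 < a * (1 - b / 2))
  obtain ⟨D₂, hD₂, hX⟩ :=
    rpow_le_mul_exp_mul_rpow (2 * k) hb0 (by nlinarith : 0 < a * (1 - (2 : ℝ) ^ (-b)))
  refine ⟨2 ^ (-k) + 2 ^ k * D₁ + D₂, by positivity, fun X Y Z hX1 hY1 hZ1 h => ?_⟩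
  wlog hYX : Y ≤ X generalizing X Y
  · have := this Y X hY1 hX1 (by linarith) (by linarith)
    linarith
  rcases le_or_gt k 0 with hk | hk
  · refine (exp_mul_rpow_le_of_nonpos ha.le hb0 hb2.le hk hY1 hYX (by linarith) h).trans ?_
    gcongr
    linarith [mul_pos (rpow_pos_of_pos two_pos k) hD₁]
  rcases le_total X (2 * Z) with hXZ | hZX
  · refine (exp_mul_rpow_le_of_le_two_mul ha.le hb0 hb2.le hk.le (by linarith) hYX hXZ h
      (hY Y hY1)).trans ?_
    gcongr
    linarith [rpow_pos_of_pos two_pos (-k)]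
  · refine (exp_mul_rpow_le_of_two_mul_le ha.le hb0 hk.le (by linarith) hYX hZ1 hZX
      (hX X hX1)).trans ?_
    gcongr
    linarith [rpow_pos_of_pos two_pos (-k), mul_pos (rpow_pos_of_pos two_pos k) hD₁]

theorem one_le_jap (v : E3) : 1 ≤ jap v :=
  one_le_sqrt.mpr (le_add_of_nonneg_right (sq_nonneg _))

theorem jap_sq (v : E3) : jap v ^ 2 = 1 + ‖v‖ ^ 2 :=
  sq_sqrt (by positivity)

/-- exponential weights are quasi-sub-multiplicative along collisions:
e^{a⟨v⟩^b} ⟨v'⟩^k ⟨v*'⟩^k ≤ C ⟨v⟩^k e^{a⟨v'⟩^b} e^{a⟨v*'⟩^b} whenever |v|² ≤ |v'|² + |v*'|². -/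
theorem stmt9 (k a b : ℝ) (ha : 0 < a) (hb1 : 0 < b) (hb2 : b < 2) :
    ∃ C : ℝ, 0 < C ∧ ∀ v v' vs' : E3, ‖v‖ ^ 2 ≤ ‖v'‖ ^ 2 + ‖vs'‖ ^ 2 →
      Real.exp (a * jap v ^ b) * jap v' ^ k * jap vs' ^ k ≤
        C * jap v ^ k * Real.exp (a * jap v' ^ b) * Real.exp (a * jap vs' ^ b) := by
  obtain ⟨C, hC, hbound⟩ := exists_exp_mul_rpow_le k ha hb1 hb2
  refine ⟨C, hC, fun v v' vs' h => hbound _ _ _ (one_le_jap v') (one_le_jap vs') (one_le_jap v) ?_⟩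
  rw [jap_sq, jap_sq, jap_sq]
  linarith

end
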